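/- Let p : Yⁿ → Y be a polynomial function, φ : X → Y a unary function, and f : Xⁿ → Y defined by f(x₁,…,xₙ) = p(φ(x₁),…,φ(xₙ)). Then the diagonal section of f satisfies δ_f(x) = med(p(0,…,0), φ(x), p(1,…,1)) for all x ∈ X, and f(x₁,…,xₙ) = p(δ_f(x₁),…,δ_f(xₙ)) for all x ∈ Xⁿ. Moreover, if p is a Sugeno integral then φ = δ_f. -/
import Mathlib


/-- Lattice polynomial functions in `n` variables on a bounded distributive lattice. -/
inductive IsLatticePolynomial {L : Type*} [DistribLattice L] [BoundedOrder L] {n : ℕ} :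
    ((Fin n → L) → L) → Prop
  | proj (i : Fin n) : IsLatticePolynomial (fun x => x i)
  | const (c : L) : IsLatticePolynomial (fun _ => c)
  | inf {p q : (Fin n → L) → L} :
      IsLatticePolynomial p → IsLatticePolynomial q → IsLatticePolynomial (fun x => p x ⊓ q x)
  | sup {p q : (Fin n → L) → L} :
      IsLatticePolynomial p → IsLatticePolynomial q → IsLatticePolynomial (fun x => p x ⊔ q x)

/-- The ternary median in a lattice. -/
def med {L : Type*} [Lattice L] (a b c : L) : L := (a ⊓ b) ⊔ (b ⊓ c) ⊔ (c ⊓ a)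

section Aux
variable {L : Type*} [DistribLattice L] [BoundedOrder L] {n : ℕ}

lemma ILP.mono {p : (Fin n → L) → L} (hp : IsLatticePolynomial p) : Monotone p := by
  induction hp with
  | proj i => exact fun a b h => h i
  | const c => exact monotone_const
  | inf h1 h2 ih1 ih2 => exact fun a b h => inf_le_inf (ih1 h) (ih2 h)
  | sup h1 h2 ih1 ih2 => exact fun a b h => sup_le_sup (ih1 h) (ih2 h)

lemma key_inf {a A b B c : L} (ha : a ≤ A) (hb : b ≤ B) :
    (a ⊔ c ⊓ A) ⊓ (b ⊔ c ⊓ B) = a ⊓ b ⊔ c ⊓ (A ⊓ B) := by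
  apply le_antisymm
  · rw [inf_sup_right, inf_sup_left, inf_sup_left]
    refine sup_le (sup_le le_sup_left ?_) (sup_le ?_ ?_)
    · exact le_sup_of_le_right (le_inf (inf_le_right.trans inf_le_left)
        (le_inf (inf_le_left.trans ha) (inf_le_right.trans inf_le_right)))
    · exact le_sup_of_le_right (le_inf (inf_le_left.trans inf_le_left)
        (le_inf (inf_le_left.trans inf_le_right) (inf_le_right.trans hb)))
    · exact le_sup_of_le_right (le_inf (inf_le_left.trans inf_le_left)
        (le_inf (inf_le_left.trans inf_le_right) (inf_le_right.trans inf_le_right)))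
  · refine sup_le (le_inf (inf_le_left.trans le_sup_left) (inf_le_right.trans le_sup_left)) ?_
    exact le_inf (le_sup_of_le_right (inf_le_inf_left _ inf_le_left))
      (le_sup_of_le_right (inf_le_inf_left _ inf_le_right))

lemma key_sup {a A b B c : L} (ha : A ≤ a) (hb : B ≤ b) :
    (a ⊓ (c ⊔ A)) ⊔ (b ⊓ (c ⊔ B)) = (a ⊔ b) ⊓ (c ⊔ (A ⊔ B)) :=
  key_inf (L := Lᵒᵈ) ha hb

lemma ILP.L1 {p : (Fin n → L) → L} (hp : IsLatticePolynomial p) (c : L) (y : Fin n → L) :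
    p (fun i => y i ⊔ c) = p y ⊔ (c ⊓ p (fun _ => ⊤)) := by
  induction hp with
  | proj i => simp [inf_comm]
  | const k => simp
  | @inf q r h1 h2 ih1 ih2 =>
    simp only [ih1, ih2]
    exact key_inf (ILP.mono h1 fun i => le_top) (ILP.mono h2 fun i => le_top)
  | sup h1 h2 ih1 ih2 =>
    simp only [ih1, ih2, inf_sup_left]
    ac_rfl

lemma ILP.L2 {p : (Fin n → L) → L} (hp : IsLatticePolynomial p) (c : L) (y : Fin n → L) :
    p (fun i => y i ⊓ c) = p y ⊓ (c ⊔ p (fun _ => ⊥)) := by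
  induction hp with
  | proj i => simp [sup_comm]
  | const k => simp
  | inf h1 h2 ih1 ih2 =>
    simp only [ih1, ih2, sup_inf_left]
    ac_rfl
  | @sup q r h1 h2 ih1 ih2 =>
    simp only [ih1, ih2]
    exact key_sup (ILP.mono h1 fun i => bot_le) (ILP.mono h2 fun i => bot_le)

lemma med_eq {a b y : L} (hab : a ≤ b) : med a y b = (y ⊓ b) ⊔ a := by
  unfold med
  rw [inf_eq_right.mpr hab]
  apply le_antisymm
  · exact sup_le (sup_le (le_sup_of_le_right inf_le_left) le_sup_left) le_sup_right
  · exact sup_le (le_sup_of_le_left le_sup_right) le_sup_right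

lemma ILP.diag {p : (Fin n → L) → L} (hp : IsLatticePolynomial p) (y : L) :
    p (fun _ => y) = (y ⊓ p (fun _ => ⊤)) ⊔ p (fun _ => ⊥) := by
  have h := ILP.L2 hp y (fun _ => ⊤)
  simp only [top_inf_eq] at h
  rw [h, inf_sup_left, inf_comm]
  congr 1
  exact inf_eq_right.mpr (ILP.mono hp fun i => bot_le)

end Aux

theorem statement_1 {X Y : Type*} [DistribLattice X] [BoundedOrder X]
    [DistribLattice Y] [BoundedOrder Y] {n : ℕ} (hn : 0 < n)
    (p : (Fin n → Y) → Y) (hp : IsLatticePolynomial p) (φ : X → Y)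
    (f : (Fin n → X) → Y) (hf : ∀ x, f x = p (fun i => φ (x i))) :
    (∀ x : X, f (fun _ => x) = med (p (fun _ => ⊥)) (φ x) (p (fun _ => ⊤))) ∧
    (∀ x : Fin n → X, f x = p (fun i => f (fun _ => x i))) ∧
    (Set.range p = Set.univ → φ = fun x => f (fun _ => x)) := by
  set a := p (fun _ => ⊥) with ha
  set b := p (fun _ => ⊤) with hb
  have hab : a ≤ b := ILP.mono hp fun i => le_top
  have hdiag : ∀ x : X, f (fun _ => x) = med a (φ x) b := by
    intro x
    rw [hf, med_eq hab]
    exact ILP.diag hp (φ x)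
  refine ⟨hdiag, ?_, ?_⟩
  · intro x
    have : (fun i => f (fun _ => x i)) = fun i => (φ (x i) ⊓ b) ⊔ a := by
      funext i; rw [hdiag, med_eq hab]
    have h2 : p (fun i => φ (x i)) ≤ b := ILP.mono hp fun i => le_top
    have h3 : a ≤ p (fun i => φ (x i)) := ILP.mono hp fun i => bot_le
    rw [this, ILP.L1 hp a (fun i => φ (x i) ⊓ b), ILP.L2 hp b (fun i => φ (x i)),
      ← ha, inf_eq_left.mpr hab, sup_eq_left.mpr hab, inf_eq_left.mpr h2,
      sup_eq_left.mpr h3, hf]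
  · intro hr
    have hbot : a = ⊥ := by
      obtain ⟨z, hz⟩ : ∃ z, p z = ⊥ := by
        have : (⊥ : Y) ∈ Set.range p := hr ▸ Set.mem_univ _
        exact this
      exact le_bot_iff.mp (hz ▸ ILP.mono hp fun i => bot_le)
    have htop : b = ⊤ := by
      obtain ⟨z, hz⟩ : ∃ z, p z = ⊤ := by
        have : (⊤ : Y) ∈ Set.range p := hr ▸ Set.mem_univ _
        exact this
      exact top_le_iff.mp (hz ▸ ILP.mono hp fun i => le_top)
    funext x
    rw [hdiag, hbot, htop, med_eq le_top, inf_top_eq, sup_bot_eq]
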